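/- Let n ≥ 1, 1 ≤ m ≤ n, M_1, …, M_m positive integers, and α ∈ ℝ. Let f be holomorphic on B_n of the diagonal form f(z) = Σ_{l=0}^∞ a_l·(z_1^{M_1}⋯z_m^{M_m})^l with f ∈ D_α(B_n). Let r ∈ ℂ[z_1,…,z_n] be any polynomial with coefficients c_k (k ∈ ℕⁿ), and define its diagonal projection π(r)(z) = Σ_l c_{(M_1 l, …, M_m l, 0, …, 0)}·z_1^{M_1 l}⋯z_m^{M_m l} (a finite sum over those l for which the multi-index (M_1 l,…,M_m l,0,…,0) occurs in r). Then ‖r·f − 1‖_α ≥ ‖π(r)·f − 1‖_α. -/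

import Mathlib

open MeasureTheory
open scoped ENNReal Classical

noncomputable section

/-- The ambient space `ℂⁿ` with the Euclidean norm; the unit ball `𝔹ₙ` is
`Metric.ball (0 : En n) 1` and the unit sphere `𝕊ₙ` is `Metric.sphere (0 : En n) 1`. -/
abbrev En (n : ℕ) := EuclideanSpace ℂ (Fin n)

/-- Lebesgue measure on `ℂⁿ`, transported along the definitional equality
`EuclideanSpace ℂ (Fin n) = (Fin n → ℂ)`. -/
noncomputable instance (n : ℕ) : MeasureSpace (En n) where
  volume := (volume : Measure (Fin n → ℂ)).map (MeasurableEquiv.toLp 2 (Fin n → ℂ))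

/-- `|k| = k₁ + … + kₙ` for a multi-index `k`. -/
def mOrd {n : ℕ} (k : Fin n → ℕ) : ℕ := ∑ i, k i

/-- `k! = k₁! ⋯ kₙ!` for a multi-index `k`. -/
def mFact {n : ℕ} (k : Fin n → ℕ) : ℕ := ∏ i, (k i).factorial

/-- `z^k = z₁^{k₁} ⋯ zₙ^{kₙ}` for a multi-index `k`. -/
def mPow {n : ℕ} (z : En n) (k : Fin n → ℕ) : ℂ := ∏ i, z i ^ k i

/-- The weight `(n+|k|)^α · (n-1)!·k! / (n-1+|k|)!` appearing in the Dirichlet-type norm. -/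
def dWeight (n : ℕ) (α : ℝ) (k : Fin n → ℕ) : ℝ :=
  ((n : ℝ) + mOrd k) ^ α * (((n - 1).factorial * mFact k : ℕ) : ℝ) /
    (((n - 1 + mOrd k).factorial : ℕ) : ℝ)

/-- The squared Dirichlet-type norm `‖·‖²_α` of a family of Taylor coefficients,
valued in `[0,∞]`. -/
def Dnorm2 (n : ℕ) (α : ℝ) (a : (Fin n → ℕ) → ℂ) : ℝ≥0∞ :=
  ∑' k : Fin n → ℕ, ENNReal.ofReal (dWeight n α k * ‖a k‖ ^ 2)

/-- `a` is the family of power-series (Taylor) coefficients of `f` on the unit ball: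
`f z = Σ_k a_k z^k` for every `z` in the ball. -/
def HasCoeffs (n : ℕ) (f : En n → ℂ) (a : (Fin n → ℕ) → ℂ) : Prop :=
  ∀ z ∈ Metric.ball (0 : En n) 1, HasSum (fun k => a k * mPow z k) (f z)

/-- The squared Dirichlet-type norm `‖f‖²_α` of a function, computed through its
power-series coefficients (which are unique when they exist). -/
def DnormF2 (n : ℕ) (α : ℝ) (f : En n → ℂ) : ℝ≥0∞ :=
  sInf {x | ∃ a, HasCoeffs n f a ∧ x = Dnorm2 n α a}

/-- Membership in the Dirichlet-type space `D_α(𝔹ₙ)`. -/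
def MemD (n : ℕ) (α : ℝ) (f : En n → ℂ) : Prop :=
  DifferentiableOn ℂ f (Metric.ball 0 1) ∧ ∃ a, HasCoeffs n f a ∧ Dnorm2 n α a < ⊤

/-- `f` is a cyclic vector of `D_α(𝔹ₙ)`: for every `ε > 0` there is a polynomial `q`
with `‖q·f - 1‖²_α < ε`. -/
def CyclicD (n : ℕ) (α : ℝ) (f : En n → ℂ) : Prop :=
  ∀ ε : ℝ, 0 < ε → ∃ q : MvPolynomial (Fin n) ℂ,
    DnormF2 n α (fun z => MvPolynomial.eval (fun i => z i) q * f z - 1) < ENNReal.ofReal ε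

/-- `μ = (M₁+…+M_m)^{M₁+…+M_m}/(M₁^{M₁}⋯M_m^{M_m})`. -/
def muVal (m : ℕ) (M : Fin m → ℕ) : ℝ :=
  (((∑ i, M i) ^ (∑ i, M i) : ℕ) : ℝ) / ∏ i, ((M i : ℝ) ^ M i)

/-- The diagonal multi-index `(M₁l, …, M_ml, 0, …, 0) ∈ ℕⁿ`. -/
def diagIdx {n m : ℕ} (hmn : m ≤ n) (M : Fin m → ℕ) (l : ℕ) : Fin n → ℕ :=
  fun i => if h : (i : ℕ) < m then M ⟨(i : ℕ), h⟩ * l else 0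

/-!
The Dirichlet-type norm is a weighted `ℓ²` norm of Taylor coefficients, and Taylor coefficients
on the ball are unique, so it suffices to compare the coefficients of `π(r)·f - 1` and `r·f - 1`
one at a time. The diagonal multi-indices form the submonoid `Δ = ℕ·(M₁, …, M_m, 0, …, 0)` of
`ℕⁿ`, which is saturated: if `k ≤ j` and `j, j - k ∈ Δ`, then `k ∈ Δ`. As `f` is supported on
`Δ`, the coefficient of `z^j` in `π(r)·f - 1` equals that of `r·f - 1` for `j ∈ Δ` and vanishes
for `j ∉ Δ`.
-/

open Filter Topology

theorem eq_zero_of_eventually_hasSum_pow_zero {d : ℕ → ℂ}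
    (h : ∀ᶠ w in 𝓝 (0 : ℂ), HasSum (fun j => d j * w ^ j) 0) : d = 0 := by
  have hp : HasFPowerSeriesAt (0 : ℂ → ℂ) (FormalMultilinearSeries.ofScalars ℂ d) 0 :=
    hasFPowerSeriesAt_iff.2 <| h.mono fun w hw => by simpa [mul_comm] using hw
  funext j
  have := congrArg (·.coeff j) hp.eq_zero
  simp only [FormalMultilinearSeries.coeff_ofScalars] at this
  exact this

/-- Induction on `n`: for fixed `z'`, the slices along the first variable are one-variable power
series vanishing near `0`. -/
theorem eq_zero_of_eventually_hasSum_monomial_zero :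
    ∀ {n : ℕ} {d : (Fin n → ℕ) → ℂ},
      (∀ᶠ z in 𝓝 (0 : Fin n → ℂ), HasSum (fun k => d k * ∏ i, z i ^ k i) 0) → d = 0
  | 0, d, h => by
    funext k
    simpa [Subsingleton.elim _ k] using h.self_of_nhds.unique (hasSum_fintype _) |>.symm
  | n + 1, d, h => by
    have hcons : ∀ᶠ p : (Fin n → ℂ) × ℂ in 𝓝 0 ×ˢ 𝓝 0, HasSum (fun q : ℕ × (Fin n → ℕ) =>
        d (Fin.cons q.1 q.2) * (p.2 ^ q.1 * ∏ i, p.1 i ^ q.2 i)) 0 := by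
      have hc : Tendsto (fun p : (Fin n → ℂ) × ℂ => (Fin.cons p.2 p.1 : Fin (n + 1) → ℂ))
          (𝓝 0 ×ˢ 𝓝 0) (𝓝 0) := by
        rw [← nhds_prod_eq]
        exact (continuous_snd.finCons continuous_fst).tendsto' _ _ Matrix.cons_zero_zero
      filter_upwards [hc.eventually h] with p hp
      rw [← (Fin.consEquiv fun _ => ℕ).hasSum_iff] at hp
      convert hp using 2 with q
      simp only [Function.comp_apply, Fin.consEquiv_apply, Fin.prod_univ_succ, Fin.cons_zero,
        Fin.cons_succ]
      rfl
    have hslices : ∀ᶠ z' in 𝓝 (0 : Fin n → ℂ),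
        ∀ j, HasSum (fun k' => d (Fin.cons j k') * ∏ i, z' i ^ k' i) 0 := by
      filter_upwards [hcons.curry] with z' hz'
      obtain ⟨w₀, hw₀, hw₀ne : w₀ ≠ 0⟩ :=
        ((eventually_nhdsWithin_of_eventually_nhds (s := {0}ᶜ) hz').and
          eventually_mem_nhdsWithin).exists
      have hsummable : ∀ j, Summable fun k' => d (Fin.cons j k') * ∏ i, z' i ^ k' i := fun j => by
        have := (hw₀.summable.comp_injective (Prod.mk_right_injective j)).mul_left (w₀ ^ j)⁻¹
        refine this.congr fun k' => ?_
        simp only [Function.comp_apply]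
        field_simp
      have hcoeff := eq_zero_of_eventually_hasSum_pow_zero
        (d := fun j => ∑' k', d (Fin.cons j k') * ∏ i, z' i ^ k' i) <|
        hz'.mono fun w hw => hw.prod_fiberwise fun j =>
          (hsummable j).hasSum.mul_right (w ^ j) |>.congr_fun fun k' => by ring
      intro j
      simpa [congrFun hcoeff j] using (hsummable j).hasSum
    funext k
    rw [← Fin.cons_self_tail k]
    exact congrFun (eq_zero_of_eventually_hasSum_monomial_zero (hslices.mono fun _ h => h (k 0))) _

theorem HasCoeffs.unique {n : ℕ} {g : En n → ℂ} {b₁ b₂ : (Fin n → ℕ) → ℂ}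
    (h₁ : HasCoeffs n g b₁) (h₂ : HasCoeffs n g b₂) : b₁ = b₂ := by
  have hball : ∀ᶠ z in 𝓝 (0 : Fin n → ℂ), WithLp.toLp 2 z ∈ Metric.ball (0 : En n) 1 :=
    (PiLp.continuous_toLp 2 _).continuousAt.preimage_mem_nhds (Metric.ball_mem_nhds _ one_pos)
  refine sub_eq_zero.1 <| eq_zero_of_eventually_hasSum_monomial_zero <| hball.mono fun z hz => ?_
  have hdiff := (h₁ _ hz).sub (h₂ _ hz)
  rw [sub_self] at hdiff
  exact hdiff.congr_fun fun k => by simp [mPow, sub_mul]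

theorem DnormF2_eq_Dnorm2 {n : ℕ} {α : ℝ} {g : En n → ℂ} {b : (Fin n → ℕ) → ℂ}
    (h : HasCoeffs n g b) : DnormF2 n α g = Dnorm2 n α b := by
  have hcoeffs : {x | ∃ a, HasCoeffs n g a ∧ x = Dnorm2 n α a} = {Dnorm2 n α b} := by
    ext x
    exact ⟨fun ⟨a, ha, hx⟩ => by rw [hx, ha.unique h]; rfl, fun hx => ⟨b, h, hx⟩⟩
  rw [DnormF2, hcoeffs, sInf_singleton]

theorem dWeight_nonneg (n : ℕ) (α : ℝ) (k : Fin n → ℕ) : 0 ≤ dWeight n α k := by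
  unfold dWeight
  positivity

theorem Dnorm2_mono {n : ℕ} {α : ℝ} {b b' : (Fin n → ℕ) → ℂ} (h : ∀ k, ‖b k‖ ≤ ‖b' k‖) :
    Dnorm2 n α b ≤ Dnorm2 n α b' :=
  ENNReal.tsum_le_tsum fun k => ENNReal.ofReal_le_ofReal <|
    mul_le_mul_of_nonneg_left (pow_le_pow_left₀ (norm_nonneg _) (h k) 2) (dWeight_nonneg n α k)

theorem mPow_add {n : ℕ} (z : En n) (k k' : Fin n → ℕ) :
    mPow z (k + k') = mPow z k * mPow z k' := by
  simp only [mPow, Pi.add_apply, pow_add, Finset.prod_mul_distrib]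

theorem mPow_zero {n : ℕ} (z : En n) : mPow z 0 = 1 := by
  simp [mPow]

theorem hasCoeffs_one (n : ℕ) : HasCoeffs n (fun _ => 1) (Pi.single 0 1) := fun z _ => by
  convert hasSum_single (f := fun k => (Pi.single 0 1 : (Fin n → ℕ) → ℂ) k * mPow z k) 0
    fun k hk => ?_
  · rw [Pi.single_eq_same, mPow_zero, one_mul]
  · rw [Pi.single_eq_of_ne hk, zero_mul]

namespace HasCoeffs

variable {n : ℕ} {f g : En n → ℂ} {A B : (Fin n → ℕ) → ℂ}

theorem mPow_mul (hf : HasCoeffs n f A) (k₀ : Fin n → ℕ) :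
    HasCoeffs n (fun z => mPow z k₀ * f z) (fun j => if k₀ ≤ j then A (j - k₀) else 0) := by
  intro z hz
  have hshift : HasSum (fun j => A j * mPow z (k₀ + j)) (mPow z k₀ * f z) :=
    ((hf z hz).mul_left (mPow z k₀)).congr_fun fun j => by rw [mPow_add]; ring
  refine ((add_right_injective k₀).hasSum_iff fun j hj => ?_).1 ?_
  · dsimp only
    rw [if_neg fun hle => hj ⟨j - k₀, add_tsub_cancel_of_le hle⟩, zero_mul]
  · simpa [Function.comp_def] using hshift

theorem const_mul (hf : HasCoeffs n f A) (c : ℂ) :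
    HasCoeffs n (fun z => c * f z) (fun j => c * A j) :=
  fun z hz => ((hf z hz).mul_left c).congr_fun fun j => by ring

theorem sub (hf : HasCoeffs n f A) (hg : HasCoeffs n g B) :
    HasCoeffs n (fun z => f z - g z) (A - B) :=
  fun z hz => ((hf z hz).sub (hg z hz)).congr_fun fun j => by simp [sub_mul]

theorem finset_sum {ι : Type*} (T : Finset ι) {f : ι → En n → ℂ} {A : ι → (Fin n → ℕ) → ℂ}
    (h : ∀ i ∈ T, HasCoeffs n (f i) (A i)) :
    HasCoeffs n (fun z => ∑ i ∈ T, f i z) (fun j => ∑ i ∈ T, A i j) :=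
  fun z hz => (hasSum_sum fun i hi => h i hi z hz).congr_fun fun _ => Finset.sum_mul ..

end HasCoeffs

def mulCoeff {ι : Type*} (T : Finset (ι → ℕ)) (c A : (ι → ℕ) → ℂ) : (ι → ℕ) → ℂ :=
  fun j => ∑ k ∈ T, c k * if k ≤ j then A (j - k) else 0

theorem HasCoeffs.polynomial_mul_sub_one {n : ℕ} {f : En n → ℂ} {A : (Fin n → ℕ) → ℂ}
    (hf : HasCoeffs n f A) (T : Finset (Fin n → ℕ)) (c : (Fin n → ℕ) → ℂ) :
    HasCoeffs n (fun z => (∑ k ∈ T, c k * mPow z k) * f z - 1)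
      (mulCoeff T c A - Pi.single 0 1) := by
  have h := (HasCoeffs.finset_sum T fun k _ => (hf.mPow_mul k).const_mul (c k)).sub
    (hasCoeffs_one n)
  simp only [← mul_assoc, ← Finset.sum_mul] at h
  exact h

section Saturated

variable {ι : Type*} (Δ : AddSubmonoid (ι → ℕ)) [DecidablePred (· ∈ Δ)] {T : Finset (ι → ℕ)}
  {c A : (ι → ℕ) → ℂ}

theorem mulCoeff_filter_of_notMem (hA : ∀ k ∉ Δ, A k = 0) {j : ι → ℕ} (hj : j ∉ Δ) :
    mulCoeff (T.filter (· ∈ Δ)) c A j = 0 :=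
  Finset.sum_eq_zero fun k hk => by
    split_ifs with hle
    · refine mul_eq_zero_of_right _ (hA _ fun hjk => hj ?_)
      simpa [add_tsub_cancel_of_le hle] using Δ.add_mem (Finset.mem_filter.1 hk).2 hjk
    · exact mul_zero _

theorem mulCoeff_filter_of_mem (hsat : ∀ j ∈ Δ, ∀ k ≤ j, j - k ∈ Δ → k ∈ Δ)
    (hA : ∀ k ∉ Δ, A k = 0) {j : ι → ℕ} (hj : j ∈ Δ) :
    mulCoeff (T.filter (· ∈ Δ)) c A j = mulCoeff T c A j :=
  Finset.sum_subset (Finset.filter_subset _ _) fun k hkT hk => by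
    have hkΔ : k ∉ Δ := fun h => hk (Finset.mem_filter.2 ⟨hkT, h⟩)
    split_ifs with hle
    · exact mul_eq_zero_of_right _ (hA _ fun h => hkΔ (hsat j hj k hle h))
    · exact mul_zero _

theorem mulCoeff_filter_sub_single_eq_indicator [DecidableEq (ι → ℕ)]
    (hsat : ∀ j ∈ Δ, ∀ k ≤ j, j - k ∈ Δ → k ∈ Δ) (hA : ∀ k ∉ Δ, A k = 0) :
    mulCoeff (T.filter (· ∈ Δ)) c A - Pi.single 0 1 =
      (Δ : Set (ι → ℕ)).indicator (mulCoeff T c A - Pi.single 0 1) := by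
  funext j
  by_cases hj : j ∈ Δ
  · simp [Set.indicator_of_mem (SetLike.mem_coe.2 hj), mulCoeff_filter_of_mem Δ hsat hA hj]
  · have hj0 : j ≠ 0 := fun h => hj (h ▸ Δ.zero_mem)
    simp [hj, hj0, mulCoeff_filter_of_notMem Δ hA hj]

end Saturated

theorem AddSubmonoid.mem_multiples_of_le_of_tsub_mem {ι : Type*} (v : ι → ℕ) :
    ∀ j ∈ AddSubmonoid.multiples v, ∀ k ≤ j, j - k ∈ AddSubmonoid.multiples v →
      k ∈ AddSubmonoid.multiples v := by
  intro j hj k hk hjk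
  obtain ⟨l', rfl⟩ := (AddSubmonoid.mem_multiples_iff _ _).1 hj
  obtain ⟨l, hl⟩ := (AddSubmonoid.mem_multiples_iff _ _).1 hjk
  refine (AddSubmonoid.mem_multiples_iff _ _).2 ⟨l' - l, ?_⟩
  rw [← tsub_tsub_cancel_of_le hk, ← hl]
  funext i
  simp [Nat.sub_mul]

theorem diagIdx_eq_nsmul {n m : ℕ} (hmn : m ≤ n) (M : Fin m → ℕ) (l : ℕ) :
    diagIdx hmn M l = l • diagIdx hmn M 1 := by
  funext i
  simp only [diagIdx, Pi.smul_apply, smul_eq_mul]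
  split_ifs <;> ring

theorem exists_eq_diagIdx_iff {n m : ℕ} (hmn : m ≤ n) (M : Fin m → ℕ) (k : Fin n → ℕ) :
    (∃ l, k = diagIdx hmn M l) ↔ k ∈ AddSubmonoid.multiples (diagIdx hmn M 1) := by
  rw [AddSubmonoid.mem_multiples_iff]
  exact exists_congr fun l => by rw [diagIdx_eq_nsmul hmn M l, eq_comm]

theorem stmt_7_general (n m : ℕ) (hmn : m ≤ n)
    (M : Fin m → ℕ) (α : ℝ)
    (f : En n → ℂ) (A : (Fin n → ℕ) → ℂ)
    (hfa : HasCoeffs n f A)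
    (hA2 : ∀ k, (∀ l, k ≠ diagIdx hmn M l) → A k = 0)
    (S : Finset (Fin n → ℕ)) (c : (Fin n → ℕ) → ℂ) :
    DnormF2 n α (fun z =>
        (∑ k ∈ S.filter (fun k => ∃ l, k = diagIdx hmn M l), c k * mPow z k) * f z - 1) ≤
      DnormF2 n α (fun z => (∑ k ∈ S, c k * mPow z k) * f z - 1) := by
  have hA : ∀ k ∉ AddSubmonoid.multiples (diagIdx hmn M 1), A k = 0 := fun k hk =>
    hA2 k fun l hl => hk ((exists_eq_diagIdx_iff hmn M k).1 ⟨l, hl⟩)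
  rw [Finset.filter_congr fun k _ => exists_eq_diagIdx_iff hmn M k,
    DnormF2_eq_Dnorm2 (hfa.polynomial_mul_sub_one _ c),
    DnormF2_eq_Dnorm2 (hfa.polynomial_mul_sub_one S c),
    mulCoeff_filter_sub_single_eq_indicator _ (AddSubmonoid.mem_multiples_of_le_of_tsub_mem _) hA]
  exact Dnorm2_mono fun j => norm_indicator_le_norm_self _ _

/-- for a diagonal function `f ∈ D_α(𝔹ₙ)` and any polynomial
`r(z) = Σ_{k ∈ S} c_k z^k`, projecting `r` onto its diagonal part `π(r)` does not
increase the distance to `1`: `‖r·f - 1‖_α ≥ ‖π(r)·f - 1‖_α`. -/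
theorem stmt_7 (n m : ℕ) (hn : 1 ≤ n) (hm : 1 ≤ m) (hmn : m ≤ n)
    (M : Fin m → ℕ) (hM : ∀ i, 1 ≤ M i) (α : ℝ)
    (f : En n → ℂ) (a : ℕ → ℂ) (A : (Fin n → ℕ) → ℂ)
    (hfd : DifferentiableOn ℂ f (Metric.ball 0 1))
    (hfa : HasCoeffs n f A)
    (hA1 : ∀ l, A (diagIdx hmn M l) = a l)
    (hA2 : ∀ k, (∀ l, k ≠ diagIdx hmn M l) → A k = 0)
    (hfin : Dnorm2 n α A < ⊤)
    (S : Finset (Fin n → ℕ)) (c : (Fin n → ℕ) → ℂ) :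
    DnormF2 n α (fun z =>
        (∑ k ∈ S.filter (fun k => ∃ l, k = diagIdx hmn M l), c k * mPow z k) * f z - 1) ≤
      DnormF2 n α (fun z => (∑ k ∈ S, c k * mPow z k) * f z - 1) :=
  stmt_7_general n m hmn M α f A hfa hA2 S c
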